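/- (Worst-case correlation parameter for the M > 2 key rate.) Let θ be real with 0 < cos²θ, write c² := cos²θ, let e_b be real with 0 < e_b ≤ c²/(1+c²), set e_p := (1+c²)·e_b, and assume 1 − e_b − e_p + e_b·c² ≥ 0. Then the function λ ↦ H₄(1 − e_b − e_p + λ, e_b − λ, λ, e_p − λ) is nonincreasing on the interval [e_b·c², e_b]; in particular its maximum over this interval (the worst case for the key generation rate) is attained at λ = e_b·c². -/
import Mathlib


/-- The entropy `H₄(x₁,x₂,x₃,x₄) = -∑ xᵢ log₂ xᵢ`
(with the convention `0·log₂ 0 = 0`, which holds since `Real.log 0 = 0`). -/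
noncomputable def H4 (x1 x2 x3 x4 : ℝ) : ℝ :=
  -(x1 * Real.logb 2 x1) - x2 * Real.logb 2 x2 - x3 * Real.logb 2 x3 - x4 * Real.logb 2 x4

lemma continuous_mul_logb : Continuous fun x : ℝ => x * Real.logb 2 x := by
  simpa [Real.logb, mul_div_assoc] using Real.continuous_mul_log.div_const (Real.log 2)

lemma hasDerivAt_mul_logb {x : ℝ} (hx : x ≠ 0) :
    HasDerivAt (fun y : ℝ => y * Real.logb 2 y) ((Real.log x + 1) / Real.log 2) x := by
  simpa [Real.logb, mul_div_assoc] using (Real.hasDerivAt_mul_log hx).div_const (Real.log 2)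

theorem worst_case_correlation_parameter
    (θ : ℝ) (hc : 0 < Real.cos θ ^ 2)
    (c2 : ℝ) (hc2 : c2 = Real.cos θ ^ 2)
    (eb ep : ℝ) (heb0 : 0 < eb) (hebA : eb ≤ c2 / (1 + c2))
    (hep : ep = (1 + c2) * eb)
    (hpos : 1 - eb - ep + eb * c2 ≥ 0) :
    AntitoneOn (fun lam => H4 (1 - eb - ep + lam) (eb - lam) lam (ep - lam))
        (Set.Icc (eb * c2) eb) ∧
    ∀ lam ∈ Set.Icc (eb * c2) eb,
      H4 (1 - eb - ep + lam) (eb - lam) lam (ep - lam) ≤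
        H4 (1 - eb - ep + eb * c2) (eb - eb * c2) (eb * c2) (ep - eb * c2) := by
  have hc2pos : 0 < c2 := hc2 ▸ hc
  have h1c2 : (0:ℝ) < 1 + c2 := by linarith
  have hebc2 : eb * (1 + c2) ≤ c2 := by
    rw [div_eq_mul_inv] at hebA
    calc eb * (1 + c2) ≤ c2 * (1 + c2)⁻¹ * (1 + c2) := by nlinarith
    _ = c2 := by field_simp
  have hL : (0:ℝ) < Real.log 2 := Real.log_pos (by norm_num)
  set f : ℝ → ℝ := fun lam => H4 (1 - eb - ep + lam) (eb - lam) lam (ep - lam) with hf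
  have hanti : AntitoneOn f (Set.Icc (eb * c2) eb) := by
    have hconv : Convex ℝ (Set.Icc (eb * c2) eb) := convex_Icc _ _
    have hcont : ContinuousOn f (Set.Icc (eb * c2) eb) := by
      apply Continuous.continuousOn
      have hg := continuous_mul_logb
      show Continuous fun lam : ℝ =>
        -((1 - eb - ep + lam) * Real.logb 2 (1 - eb - ep + lam))
          - (eb - lam) * Real.logb 2 (eb - lam) - lam * Real.logb 2 lam
          - (ep - lam) * Real.logb 2 (ep - lam)
      exact (((hg.comp (continuous_const.add continuous_id)).neg.sub
        (hg.comp (continuous_const.sub continuous_id))).sub hg).sub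
        (hg.comp (continuous_const.sub continuous_id))
    apply antitoneOn_of_deriv_nonpos hconv hcont
    · intro x hx
      rw [interior_Icc] at hx
      obtain ⟨hx1, hx2⟩ := hx
      have h1 : 0 < 1 - eb - ep + x := by linarith
      have h2 : 0 < eb - x := by linarith
      have h3 : 0 < x := lt_trans (by positivity) hx1
      have h4 : 0 < ep - x := by nlinarith
      have hd : HasDerivAt f
          (-((Real.log (1 - eb - ep + x) + 1) / Real.log 2 * 1)
            - (Real.log (eb - x) + 1) / Real.log 2 * (-1)
            - (Real.log x + 1) / Real.log 2
            - (Real.log (ep - x) + 1) / Real.log 2 * (-1)) x := by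
        have d1 := (hasDerivAt_mul_logb h1.ne').comp x
          (((hasDerivAt_id x).const_add (1 - eb - ep)))
        have d2 := (hasDerivAt_mul_logb h2.ne').comp x ((hasDerivAt_id x).const_sub eb)
        have d3 := hasDerivAt_mul_logb h3.ne'
        have d4 := (hasDerivAt_mul_logb h4.ne').comp x ((hasDerivAt_id x).const_sub ep)
        exact ((d1.neg.sub d2).sub d3).sub d4
      exact hd.differentiableAt.differentiableWithinAt
    · intro x hx
      rw [interior_Icc] at hx
      obtain ⟨hx1, hx2⟩ := hx
      have h1 : 0 < 1 - eb - ep + x := by linarith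
      have h2 : 0 < eb - x := by linarith
      have h3 : 0 < x := lt_trans (by positivity) hx1
      have h4 : 0 < ep - x := by nlinarith
      have hd : HasDerivAt f
          (-((Real.log (1 - eb - ep + x) + 1) / Real.log 2 * 1)
            - (Real.log (eb - x) + 1) / Real.log 2 * (-1)
            - (Real.log x + 1) / Real.log 2
            - (Real.log (ep - x) + 1) / Real.log 2 * (-1)) x := by
        have d1 := (hasDerivAt_mul_logb h1.ne').comp x
          (((hasDerivAt_id x).const_add (1 - eb - ep)))
        have d2 := (hasDerivAt_mul_logb h2.ne').comp x ((hasDerivAt_id x).const_sub eb)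
        have d3 := hasDerivAt_mul_logb h3.ne'
        have d4 := (hasDerivAt_mul_logb h4.ne').comp x ((hasDerivAt_id x).const_sub ep)
        exact ((d1.neg.sub d2).sub d3).sub d4
      rw [hd.deriv]
      have hprod : (eb - x) * (ep - x) ≤ (1 - eb - ep + x) * x := by nlinarith
      have hlog : Real.log ((eb - x) * (ep - x)) ≤ Real.log ((1 - eb - ep + x) * x) :=
        Real.log_le_log (by positivity) hprod
      rw [Real.log_mul h2.ne' h4.ne', Real.log_mul h1.ne' h3.ne'] at hlog
      have heq : -((Real.log (1 - eb - ep + x) + 1) / Real.log 2 * 1)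
            - (Real.log (eb - x) + 1) / Real.log 2 * (-1)
            - (Real.log x + 1) / Real.log 2
            - (Real.log (ep - x) + 1) / Real.log 2 * (-1)
          = (Real.log (eb - x) + Real.log (ep - x)
              - Real.log (1 - eb - ep + x) - Real.log x) / Real.log 2 := by
        ring
      rw [heq]
      exact div_nonpos_iff.mpr (Or.inr ⟨by linarith, hL.le⟩)
  have hc21 : c2 ≤ 1 := by rw [hc2]; nlinarith [Real.neg_one_le_cos θ, Real.cos_le_one θ]
  refine ⟨hanti, fun lam hlam => ?_⟩
  exact hanti (Set.left_mem_Icc.mpr (by nlinarith)) hlam hlam.1
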